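/- Diagonal summing bound: Let E₁, E₂, E₃ > 0 and S₁, S₂, S₃ > 0 with E₁/S₁ ≤ E₂/S₂ ≤ E₃/S₃. Then Σ_{n∈ℤ} 2^{2n} Π_{j=1}^3 min(2^{−n} E_j, S_j) ≲ E₁ E₂ S₃ · (1 + log(1 + (E₃/S₃)/(E₂/S₂))). -/

import Mathlib

open MeasureTheory Set

/-- The Walsh functions `w_l : ℝ → ℝ`, defined recursively by
`w_0 = χ_{[0,1)}`, `w_{2l}(x) = w_l(2x) + w_l(2x−1)`,
`w_{2l+1}(x) = w_l(2x) − w_l(2x−1)`. -/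
noncomputable def walsh : ℕ → ℝ → ℝ
  | 0, x => if x ∈ Set.Ico (0:ℝ) 1 then 1 else 0
  | (n+1), x =>
      if (n+1) % 2 = 0 then walsh ((n+1)/2) (2*x) + walsh ((n+1)/2) (2*x - 1)
      else walsh ((n+1)/2) (2*x) - walsh ((n+1)/2) (2*x - 1)
  decreasing_by all_goals exact Nat.div_lt_self (Nat.succ_pos n) one_lt_two

/-- A tile `[2^{-k}n, 2^{-k}(n+1)) × [2^k l, 2^k(l+1))`:
a half-open dyadic rectangle of area one. -/
structure Tile where
  k : ℤ
  n : ℤ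
  l : ℤ
deriving DecidableEq

namespace Tile

/-- The time interval `I_P = [2^{-k}n, 2^{-k}(n+1))` of a tile. -/
noncomputable def I (p : Tile) : Set ℝ := Set.Ico ((2:ℝ)^(-p.k) * p.n) ((2:ℝ)^(-p.k) * (p.n+1))

/-- The frequency interval `ω_P = [2^k l, 2^k(l+1))` of a tile. -/
noncomputable def freq (p : Tile) : Set ℝ := Set.Ico ((2:ℝ)^(p.k) * p.l) ((2:ℝ)^(p.k) * (p.l+1))

/-- The tile as a subset `I_P × ω_P` of the time-frequency plane. -/
noncomputable def area (p : Tile) : Set (ℝ × ℝ) := p.I ×ˢ p.freq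

/-- The length `|I_P| = 2^{-k}` of the time interval of a tile. -/
noncomputable def len (p : Tile) : ℝ := (2:ℝ)^(-p.k)

/-- The center `ξ_P` of the frequency interval of a tile. -/
noncomputable def ξ (p : Tile) : ℝ := (2:ℝ)^(p.k) * ((p.l : ℝ) + 1/2)

/-- The tile order: `p < q` iff `I_p ⊊ I_q` and `ω_q ⊆ ω_p`. -/
def lt (p q : Tile) : Prop := p.I ⊂ q.I ∧ q.freq ⊆ p.freq

/-- `p ≤ q` iff `p < q` or `p = q`. -/
def le (p q : Tile) : Prop := Tile.lt p q ∨ p = q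

/-- The Walsh wave packet `φ_P(x) = 2^{k/2} w_l(2^k x − n)` of a tile. -/
noncomputable def wp (p : Tile) : ℝ → ℝ :=
  fun x => Real.sqrt ((2:ℝ)^(p.k)) * walsh p.l.toNat ((2:ℝ)^(p.k) * x - p.n)

end Tile

/-- A quartile `[2^{-k}n, 2^{-k}(n+1)) × [2^{k+2}l, 2^{k+2}(l+1))`:
a dyadic rectangle of area four. -/
structure Quartile where
  k : ℤ
  n : ℤ
  l : ℤ
deriving DecidableEq

namespace Quartile

/-- The time interval `I_P` of a quartile. -/
noncomputable def I (P : Quartile) : Set ℝ := Set.Ico ((2:ℝ)^(-P.k) * P.n) ((2:ℝ)^(-P.k) * (P.n+1))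

/-- The length `|I_P| = 2^{-k}` of the time interval of a quartile. -/
noncomputable def len (P : Quartile) : ℝ := (2:ℝ)^(-P.k)

/-- The `j`-th sub-tile `P_j = I_P × [2^k(4l+j−1), 2^k(4l+j))` of a quartile,
for `j = 1, 2, 3`. -/
def tile (P : Quartile) (j : ℕ) : Tile := ⟨P.k, P.n, 4*P.l + ((j - 1 : ℕ) : ℤ)⟩

end Quartile

/-- `T` is an `i`-tree with top `top`: `P_i ≤ top_i` for all `P ∈ T`. -/
def IsTree (i : ℕ) (top : Quartile) (T : Finset Quartile) : Prop :=
  ∀ P ∈ T, Tile.le (P.tile i) (top.tile i)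

/-- `size_j((a_P)_{P∈Ps})`: the sup over trees `T ⊆ Ps` which are `i`-trees for
some `i ≠ j` of `(|I_T|⁻¹ Σ_{P∈T} |a_{P_j}|²)^{1/2}`. -/
noncomputable def size (Ps : Finset Quartile) (j : ℕ) (a : Quartile → ℂ) : ℝ :=
  sSup ((fun p : Quartile × Finset Quartile =>
      Real.sqrt ((∑ P ∈ p.2, ‖a P‖^2) / p.1.len)) ''
    {p | p.2 ⊆ Ps ∧ ∃ i ∈ ({1,2,3} : Set ℕ), i ≠ j ∧ IsTree i p.1 p.2})

/-- `energy_j((a_P)_{P∈Ps})`: the sup over subsets `D ⊆ Ps` with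
`{P_j : P ∈ D}` pairwise disjoint of `(Σ_{P∈D} |a_{P_j}|²)^{1/2}`. -/
noncomputable def energy (Ps : Finset Quartile) (j : ℕ) (a : Quartile → ℂ) : ℝ :=
  sSup ((fun D : Finset Quartile => Real.sqrt (∑ P ∈ D, ‖a P‖^2)) ''
    {D | D ⊆ Ps ∧ ∀ P ∈ D, ∀ P' ∈ D, P ≠ P' →
      Disjoint (P.tile j).area (P'.tile j).area})

/-- The `L^{1,∞}(I)` quasinorm `sup_{λ>0} λ |{x ∈ I : |g(x)| > λ}|`. -/
noncomputable def weakL1 (g : ℝ → ℝ) (I : Set ℝ) : ℝ :=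
  sSup {r | ∃ lam : ℝ, 0 < lam ∧ r = lam * (volume {x ∈ I | lam < |g x|}).toReal}

/-- The square function `(Σ_{P∈T} |a_{P_j}|² χ_{I_P}/|I_P|)^{1/2}` of a tree. -/
noncomputable def treeFn (T : Finset Quartile) (a : Quartile → ℂ) : ℝ → ℝ :=
  fun x => Real.sqrt (∑ P ∈ T, ‖a P‖^2 * (P.I.indicator (fun _ => (1:ℝ)) x) / P.len)


private lemma geom_Icc (N : ℤ) : ∀ K : ℕ, ∑ n ∈ Finset.Icc (N - K) N, (2:ℝ)^n = 2^(N+1) - 2^(N - (K:ℤ)) := by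
  intro K
  induction K with
  | zero =>
      simp [zpow_add_one₀ (two_ne_zero (α := ℝ))]
      ring
  | succ K ih =>
      have hins : Finset.Icc (N - ((K:ℤ)+1)) N = insert (N - ((K:ℤ)+1)) (Finset.Icc (N - (K:ℤ)) N) := by
        ext n
        simp only [Finset.mem_Icc, Finset.mem_insert]
        omega
      have hnm : (N - ((K:ℤ)+1)) ∉ Finset.Icc (N - (K:ℤ)) N := by
        simp only [Finset.mem_Icc]; omega
      push_cast
      rw [hins, Finset.sum_insert hnm]
      push_cast at ih
      rw [ih]
      have h1 : (2:ℝ)^(N - (K:ℤ)) = 2^(N - ((K:ℤ)+1)) * 2 := by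
        rw [← zpow_add_one₀ (two_ne_zero (α := ℝ))]
        congr 1
        ring
      rw [h1]; ring

private lemma sum_zpow_le (N : ℤ) (F : Finset ℤ) (hF : ∀ n ∈ F, n ≤ N) :
    ∑ n ∈ F, (2:ℝ)^n ≤ 2^(N+1) := by
  rcases F.eq_empty_or_nonempty with h | h
  · simp [h]; positivity
  · have hmN : F.min' h ≤ N := hF _ (F.min'_mem h)
    have htn : N - ((N - F.min' h).toNat : ℤ) = F.min' h := by
      rw [Int.toNat_of_nonneg (by omega)]; ring
    have hsub : F ⊆ Finset.Icc (N - ((N - F.min' h).toNat : ℤ)) N := by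
      intro n hn
      simp only [Finset.mem_Icc, htn]
      exact ⟨F.min'_le n hn, hF n hn⟩
    calc ∑ n ∈ F, (2:ℝ)^n ≤ ∑ n ∈ Finset.Icc (N - ((N - F.min' h).toNat : ℤ)) N, (2:ℝ)^n :=
          Finset.sum_le_sum_of_subset_of_nonneg hsub (by intros; positivity)
      _ = 2^(N+1) - 2^(N - ((N - F.min' h).toNat : ℤ)) := geom_Icc N _
      _ ≤ 2^(N+1) := by
          have : (0:ℝ) < 2^(N - ((N - F.min' h).toNat : ℤ)) := by positivity
          linarith

private lemma sum_zpow_neg_le (M : ℤ) (F : Finset ℤ) (hF : ∀ n ∈ F, M + 1 ≤ n) :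
    ∑ n ∈ F, (2:ℝ)^(-n) ≤ 2^(-M) := by
  have key := sum_zpow_le (-(M+1)) (F.image Neg.neg) (by
    intro n hn
    simp only [Finset.mem_image] at hn
    obtain ⟨m, hm, rfl⟩ := hn
    have := hF m hm; omega)
  rw [Finset.sum_image (by intro x _ y _ h; omega)] at key
  have heq : -(M+1) + 1 = -M := by ring
  rwa [heq] at key

private lemma sum_pieces (f : ℤ → ℝ) (N M : ℤ) (u v w : ℝ) (hu : 0 ≤ u) (hv : 0 ≤ v) (hw : 0 ≤ w)
    (h1 : ∀ n, f n ≤ (2:ℝ)^n * u) (h2 : ∀ n, f n ≤ v) (h3 : ∀ n, f n ≤ (2:ℝ)^(-n) * w)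
    (F : Finset ℤ) :
    ∑ n ∈ F, f n ≤ 2^(N+1) * u + ((Finset.Icc (N+1) M).card : ℝ) * v + 2^(-M) * w := by
  classical
  have p1 : ∑ n ∈ F.filter (fun n => n ≤ N), f n ≤ 2^(N+1) * u := by
    calc ∑ n ∈ F.filter (fun n => n ≤ N), f n
        ≤ ∑ n ∈ F.filter (fun n => n ≤ N), (2:ℝ)^n * u :=
          Finset.sum_le_sum (fun n _ => h1 n)
      _ = (∑ n ∈ F.filter (fun n => n ≤ N), (2:ℝ)^n) * u := by rw [Finset.sum_mul]
      _ ≤ 2^(N+1) * u := by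
          refine mul_le_mul_of_nonneg_right ?_ hu
          exact sum_zpow_le N _ (fun n hn => (Finset.mem_filter.mp hn).2)
  have hsub : (F.filter (fun n => ¬ n ≤ N)).filter (fun n => n ≤ M) ⊆ Finset.Icc (N+1) M := by
    intro n hn
    simp only [Finset.mem_filter] at hn
    simp only [Finset.mem_Icc]
    omega
  have p2 : ∑ n ∈ (F.filter (fun n => ¬ n ≤ N)).filter (fun n => n ≤ M), f n
      ≤ ((Finset.Icc (N+1) M).card : ℝ) * v := by
    calc ∑ n ∈ (F.filter (fun n => ¬ n ≤ N)).filter (fun n => n ≤ M), f n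
        ≤ ∑ _n ∈ (F.filter (fun n => ¬ n ≤ N)).filter (fun n => n ≤ M), v :=
          Finset.sum_le_sum (fun n _ => h2 n)
      _ = (((F.filter (fun n => ¬ n ≤ N)).filter (fun n => n ≤ M)).card : ℝ) * v := by
          rw [Finset.sum_const, nsmul_eq_mul]
      _ ≤ ((Finset.Icc (N+1) M).card : ℝ) * v := by
          refine mul_le_mul_of_nonneg_right ?_ hv
          exact_mod_cast Finset.card_le_card hsub
  have p3 : ∑ n ∈ (F.filter (fun n => ¬ n ≤ N)).filter (fun n => ¬ n ≤ M), f n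
      ≤ 2^(-M) * w := by
    calc ∑ n ∈ (F.filter (fun n => ¬ n ≤ N)).filter (fun n => ¬ n ≤ M), f n
        ≤ ∑ n ∈ (F.filter (fun n => ¬ n ≤ N)).filter (fun n => ¬ n ≤ M), (2:ℝ)^(-n) * w :=
          Finset.sum_le_sum (fun n _ => h3 n)
      _ = (∑ n ∈ (F.filter (fun n => ¬ n ≤ N)).filter (fun n => ¬ n ≤ M), (2:ℝ)^(-n)) * w := by
          rw [Finset.sum_mul]
      _ ≤ 2^(-M) * w := by
          refine mul_le_mul_of_nonneg_right ?_ hw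
          refine sum_zpow_neg_le M _ (fun n hn => ?_)
          have := (Finset.mem_filter.mp hn).2
          omega
  have e1 : ∑ n ∈ F, f n
      = ∑ n ∈ F.filter (fun n => n ≤ N), f n + ∑ n ∈ F.filter (fun n => ¬ n ≤ N), f n :=
    (Finset.sum_filter_add_sum_filter_not F _ f).symm
  have e2 : ∑ n ∈ F.filter (fun n => ¬ n ≤ N), f n
      = ∑ n ∈ (F.filter (fun n => ¬ n ≤ N)).filter (fun n => n ≤ M), f n
        + ∑ n ∈ (F.filter (fun n => ¬ n ≤ N)).filter (fun n => ¬ n ≤ M), f n :=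
    (Finset.sum_filter_add_sum_filter_not _ _ f).symm
  rw [e1, e2]
  linarith

/-- the diagonal summing bound
`Σ_{n∈ℤ} 2^{2n} ∏_j min(2^{-n}E_j, S_j)
  ≲ E₁E₂S₃ (1 + log(1 + (E₃/S₃)/(E₂/S₂)))`. -/
theorem diagonal_sum :
    ∃ C : ℝ, 0 < C ∧ ∀ E₁ E₂ E₃ S₁ S₂ S₃ : ℝ,
      0 < E₁ → 0 < E₂ → 0 < E₃ → 0 < S₁ → 0 < S₂ → 0 < S₃ →
      E₁/S₁ ≤ E₂/S₂ → E₂/S₂ ≤ E₃/S₃ →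
      ∑' n : ℤ, (2:ℝ)^(2*n) *
          (min ((2:ℝ)^(-n) * E₁) S₁ * min ((2:ℝ)^(-n) * E₂) S₂ *
            min ((2:ℝ)^(-n) * E₃) S₃) ≤
        C * (E₁ * E₂ * S₃ * (1 + Real.log (1 + (E₃/S₃)/(E₂/S₂)))) := by
  refine ⟨5, by norm_num, fun E₁ E₂ E₃ S₁ S₂ S₃ hE₁ hE₂ hE₃ hS₁ hS₂ hS₃ _ h23 => ?_⟩
  have ha0 : 0 < E₂/S₂ := div_pos hE₂ hS₂
  have hb0 : 0 < E₃/S₃ := div_pos hE₃ hS₃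
  set a := E₂/S₂ with ha
  set b := E₃/S₃ with hb
  set t := b / a with htdef
  have ht0 : 0 < t := div_pos hb0 ha0
  have hL : 0 ≤ Real.log (1 + t) := Real.log_nonneg (by linarith)
  set L := Real.log (1 + t) with hLdef
  set N : ℤ := ⌊Real.logb 2 a⌋ with hN
  set M : ℤ := ⌈Real.logb 2 b⌉ with hM
  have h2N : (2:ℝ)^N ≤ a := by
    have h1 : ((N:ℤ):ℝ) ≤ Real.logb 2 a := Int.floor_le _
    calc (2:ℝ)^N = (2:ℝ)^((N:ℤ):ℝ) := (Real.rpow_intCast 2 N).symm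
      _ ≤ (2:ℝ)^(Real.logb 2 a) := Real.rpow_le_rpow_of_exponent_le one_le_two h1
      _ = a := Real.rpow_logb (by norm_num) (by norm_num) ha0
  have h2M : b ≤ (2:ℝ)^M := by
    have h1 : Real.logb 2 b ≤ ((M:ℤ):ℝ) := Int.le_ceil _
    calc b = (2:ℝ)^(Real.logb 2 b) := (Real.rpow_logb (by norm_num) (by norm_num) hb0).symm
      _ ≤ (2:ℝ)^(((M:ℤ):ℝ)) := Real.rpow_le_rpow_of_exponent_le one_le_two h1
      _ = (2:ℝ)^M := Real.rpow_intCast 2 M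
  -- pointwise bounds on the summand
  have hterm1 : ∀ n : ℤ, (2:ℝ)^(2*n) *
      (min ((2:ℝ)^(-n) * E₁) S₁ * min ((2:ℝ)^(-n) * E₂) S₂ * min ((2:ℝ)^(-n) * E₃) S₃)
      ≤ (2:ℝ)^n * (E₁ * S₂ * S₃) := by
    intro n
    calc (2:ℝ)^(2*n) *
        (min ((2:ℝ)^(-n) * E₁) S₁ * min ((2:ℝ)^(-n) * E₂) S₂ * min ((2:ℝ)^(-n) * E₃) S₃)
        ≤ (2:ℝ)^(2*n) * (((2:ℝ)^(-n) * E₁) * S₂ * S₃) := by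
          gcongr <;> first
            | exact min_le_left _ _
            | exact min_le_right _ _
      _ = ((2:ℝ)^(2*n) * (2:ℝ)^(-n)) * (E₁ * S₂ * S₃) := by ring
      _ = (2:ℝ)^n * (E₁ * S₂ * S₃) := by
          rw [← zpow_add₀ (two_ne_zero (α := ℝ))]
          congr 1
          ring
  have hterm2 : ∀ n : ℤ, (2:ℝ)^(2*n) *
      (min ((2:ℝ)^(-n) * E₁) S₁ * min ((2:ℝ)^(-n) * E₂) S₂ * min ((2:ℝ)^(-n) * E₃) S₃)
      ≤ E₁ * E₂ * S₃ := by
    intro n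
    calc (2:ℝ)^(2*n) *
        (min ((2:ℝ)^(-n) * E₁) S₁ * min ((2:ℝ)^(-n) * E₂) S₂ * min ((2:ℝ)^(-n) * E₃) S₃)
        ≤ (2:ℝ)^(2*n) * (((2:ℝ)^(-n) * E₁) * ((2:ℝ)^(-n) * E₂) * S₃) := by
          gcongr <;> first
            | exact min_le_left _ _
            | exact min_le_right _ _
      _ = ((2:ℝ)^(2*n) * (2:ℝ)^(-n) * (2:ℝ)^(-n)) * (E₁ * E₂ * S₃) := by ring
      _ = E₁ * E₂ * S₃ := by
          rw [← zpow_add₀ (two_ne_zero (α := ℝ)), ← zpow_add₀ (two_ne_zero (α := ℝ))]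
          have : 2*n + -n + -n = 0 := by ring
          rw [this, zpow_zero, one_mul]
  have hterm3 : ∀ n : ℤ, (2:ℝ)^(2*n) *
      (min ((2:ℝ)^(-n) * E₁) S₁ * min ((2:ℝ)^(-n) * E₂) S₂ * min ((2:ℝ)^(-n) * E₃) S₃)
      ≤ (2:ℝ)^(-n) * (E₁ * E₂ * E₃) := by
    intro n
    calc (2:ℝ)^(2*n) *
        (min ((2:ℝ)^(-n) * E₁) S₁ * min ((2:ℝ)^(-n) * E₂) S₂ * min ((2:ℝ)^(-n) * E₃) S₃)
        ≤ (2:ℝ)^(2*n) * (((2:ℝ)^(-n) * E₁) * ((2:ℝ)^(-n) * E₂) * ((2:ℝ)^(-n) * E₃)) := by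
          gcongr <;> exact min_le_left _ _
      _ = ((2:ℝ)^(2*n) * (2:ℝ)^(-n) * (2:ℝ)^(-n) * (2:ℝ)^(-n)) * (E₁ * E₂ * E₃) := by ring
      _ = (2:ℝ)^(-n) * (E₁ * E₂ * E₃) := by
          rw [← zpow_add₀ (two_ne_zero (α := ℝ)), ← zpow_add₀ (two_ne_zero (α := ℝ)),
            ← zpow_add₀ (two_ne_zero (α := ℝ))]
          congr 1
          ring
  -- bounds on the three pieces
  have hpiece1 : (2:ℝ)^(N+1) * (E₁ * S₂ * S₃) ≤ 2 * (E₁ * E₂ * S₃) := by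
    have h1 : (2:ℝ)^(N+1) ≤ 2 * a := by
      rw [zpow_add_one₀ (two_ne_zero (α := ℝ))]
      linarith
    calc (2:ℝ)^(N+1) * (E₁ * S₂ * S₃) ≤ (2 * a) * (E₁ * S₂ * S₃) := by
          refine mul_le_mul_of_nonneg_right h1 (by positivity)
      _ = 2 * (E₁ * E₂ * S₃) := by
          rw [ha]
          field_simp
  have hMN : ((Finset.Icc (N+1) M).card : ℝ) ≤ 2 + 2*L := by
    have hc' : (Finset.Icc (N+1) M).card = (M - N).toNat := by
      rw [Int.card_Icc]
      congr 1
      ring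
    rw [hc']
    rcases le_or_gt (M - N) 0 with h | h
    · rw [Int.toNat_of_nonpos h]
      push_cast
      linarith
    · have hcast : (((M - N).toNat : ℕ) : ℝ) = (M : ℝ) - N := by
        have := Int.toNat_of_nonneg h.le
        exact_mod_cast congrArg (fun z : ℤ => (z : ℝ)) this
      rw [hcast]
      have h1 : (M:ℝ) < Real.logb 2 b + 1 := by
        have := Int.ceil_lt_add_one (Real.logb 2 b)
        exact_mod_cast this
      have h2 : Real.logb 2 a - 1 < (N:ℝ) := Int.sub_one_lt_floor _
      have h3 : Real.logb 2 b - Real.logb 2 a = Real.logb 2 t := by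
        rw [htdef, Real.logb_div (ne_of_gt hb0) (ne_of_gt ha0)]
      have h4 : Real.log t ≤ L := by
        rw [hLdef]
        exact Real.log_le_log ht0 (by linarith)
      have hlog2 : (0.6931471803 : ℝ) < Real.log 2 := Real.log_two_gt_d9
      have h5 : Real.logb 2 t ≤ 2 * L := by
        rw [Real.logb, div_le_iff₀ (by linarith)]
        nlinarith
      linarith
  have hpiece3 : (2:ℝ)^(-M) * (E₁ * E₂ * E₃) ≤ E₁ * E₂ * S₃ := by
    have h1 : (2:ℝ)^(-M) ≤ b⁻¹ := by
      rw [zpow_neg]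
      exact inv_anti₀ hb0 h2M
    calc (2:ℝ)^(-M) * (E₁ * E₂ * E₃) ≤ b⁻¹ * (E₁ * E₂ * E₃) := by
          refine mul_le_mul_of_nonneg_right h1 (by positivity)
      _ = E₁ * E₂ * S₃ := by
          rw [hb]
          field_simp
  have hc : (0:ℝ) ≤ 5 * (E₁ * E₂ * S₃ * (1 + L)) := by positivity
  refine tsum_le_of_sum_le' hc ?_
  intro F
  have key := sum_pieces
    (fun n : ℤ => (2:ℝ)^(2*n) *
      (min ((2:ℝ)^(-n) * E₁) S₁ * min ((2:ℝ)^(-n) * E₂) S₂ * min ((2:ℝ)^(-n) * E₃) S₃))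
    N M (E₁ * S₂ * S₃) (E₁ * E₂ * S₃) (E₁ * E₂ * E₃)
    (by positivity) (by positivity) (by positivity)
    hterm1 hterm2 hterm3 F
  have hcardv : ((Finset.Icc (N+1) M).card : ℝ) * (E₁ * E₂ * S₃) ≤ (2 + 2*L) * (E₁ * E₂ * S₃) :=
    mul_le_mul_of_nonneg_right hMN (by positivity)
  have hV : (0:ℝ) < E₁ * E₂ * S₃ := by positivity
  calc ∑ n ∈ F, (2:ℝ)^(2*n) *
      (min ((2:ℝ)^(-n) * E₁) S₁ * min ((2:ℝ)^(-n) * E₂) S₂ * min ((2:ℝ)^(-n) * E₃) S₃)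
      ≤ 2^(N+1) * (E₁ * S₂ * S₃) + ((Finset.Icc (N+1) M).card : ℝ) * (E₁ * E₂ * S₃)
        + 2^(-M) * (E₁ * E₂ * E₃) := key
    _ ≤ 2 * (E₁ * E₂ * S₃) + (2 + 2*L) * (E₁ * E₂ * S₃) + (E₁ * E₂ * S₃) := by
        linarith
    _ ≤ 5 * (E₁ * E₂ * S₃ * (1 + L)) := by nlinarith
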